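/- arXiv:2406.03992 — 11 statements merged into one kernel-verified Lean document; each statement's English description precedes it below -/
import Mathlib

section
/- Let A be an m×n matrix over ℂ, x ∈ ℂⁿ, y ∈ ℂᵐ with ω = y* A x ≠ 0. Then rank(A − ω⁻¹ A x y* A) = rank(A) − 1. -/
/-!
Put `B = A - ω⁻¹ A x y* A`. Then `y* B = 0` while `y* A x = ω ≠ 0`, so `A x ∉ range B`; and
`A v = B v + ω⁻¹ (y* A v) A x`, so `range A = range B ⊕ span {A x}`.
-/

open Matrix Module

namespace LinearMap

variable {K V W : Type*} [Field K] [AddCommGroup V] [Module K V] [AddCommGroup W] [Module K W]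

theorem finrank_range_sub_smulRight_add_one [FiniteDimensional K W] (f : V →ₗ[K] W)
    (φ : W →ₗ[K] K) {x : V} (hx : φ (f x) ≠ 0) :
    finrank K (range (f - (φ (f x))⁻¹ • (φ ∘ₗ f).smulRight (f x))) + 1 =
      finrank K (range f) := by
  set g := f - (φ (f x))⁻¹ • (φ ∘ₗ f).smulRight (f x)
  set c : V → K := fun v => (φ (f x))⁻¹ * φ (f v)
  have hg : ∀ v, g v = f (v - c v • x) := fun v => by
    simp [g, c, mul_smul]
  have hφg : ∀ v, φ (g v) = 0 := fun v => by
    rw [hg, map_sub, map_smul, map_sub, map_smul, smul_eq_mul, mul_right_comm,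
      inv_mul_cancel₀ hx, one_mul, sub_self]
  have hnotMem : f x ∉ range g := by
    rintro ⟨v, hv⟩
    exact hx (hv ▸ hφg v)
  have hsup : range g ⊔ Submodule.span K {f x} = range f := by
    apply le_antisymm
    · refine sup_le ?_ ((Submodule.span_singleton_le_iff_mem _ _).mpr (mem_range_self f x))
      rintro _ ⟨v, rfl⟩
      exact hg v ▸ mem_range_self f _
    · rintro _ ⟨v, rfl⟩
      have hdecomp : f v = g v + c v • f x := by rw [hg, map_sub, map_smul, sub_add_cancel]
      rw [hdecomp]
      exact Submodule.add_mem_sup (mem_range_self g v)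
        (Submodule.smul_mem _ _ (Submodule.mem_span_singleton_self _))
  rw [← hsup, Submodule.finrank_sup_span_singleton hnotMem]

end LinearMap

namespace Matrix

theorem mul_eq_vecMulVec {m n R : Type*} [CommSemiring R] (c : Matrix m (Fin 1) R)
    (r : Matrix (Fin 1) n R) :
    c * r = vecMulVec (fun i => c i 0) (r 0) := by
  ext i j
  simp [mul_apply, vecMulVec_apply]

variable {m n K : Type*} [Fintype m] [Fintype n] [Field K]

theorem rank_sub_smul_vecMulVec_add_one (A : Matrix m n K) (u : n → K) (v : m → K)
    (hω : v ⬝ᵥ (A *ᵥ u) ≠ 0) :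
    (A - (v ⬝ᵥ (A *ᵥ u))⁻¹ • vecMulVec (A *ᵥ u) (v ᵥ* A)).rank + 1 = A.rank := by
  have hlin : (A - (v ⬝ᵥ (A *ᵥ u))⁻¹ • vecMulVec (A *ᵥ u) (v ᵥ* A)).mulVecLin =
      A.mulVecLin - (v ⬝ᵥ (A *ᵥ u))⁻¹ •
        (dotProductBilin K K v ∘ₗ A.mulVecLin).smulRight (A.mulVecLin u) := by
    ext w : 1
    simp [vecMulVec_mulVec, dotProduct_mulVec]
  rw [rank, rank, hlin]
  exact LinearMap.finrank_range_sub_smulRight_add_one A.mulVecLin (dotProductBilin K K v) hω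

end Matrix

/-- Classical Wedderburn rank-one reduction: if ω = y* A x ≠ 0 then
    rank(A − ω⁻¹ A x y* A) = rank A − 1. -/
theorem wedderburn_rank_one_reduction (m n : ℕ)
    (A : Matrix (Fin m) (Fin n) ℂ)
    (x : Matrix (Fin n) (Fin 1) ℂ) (y : Matrix (Fin m) (Fin 1) ℂ)
    (ω : ℂ) (hω : ω = (yᴴ * A * x) 0 0) (hne : ω ≠ 0) :
    (A - ω⁻¹ • (A * x * yᴴ * A)).rank + 1 = A.rank := by
  have hω_dot : ω = yᴴ 0 ⬝ᵥ (A *ᵥ fun j => x j 0) := by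
    rw [hω, dotProduct_mulVec]; rfl
  have hprod : A * x * yᴴ * A = vecMulVec (A *ᵥ fun j => x j 0) (yᴴ 0 ᵥ* A) := by
    rw [Matrix.mul_assoc (A * x), mul_eq_vecMulVec]; rfl
  rw [hprod, hω_dot]
  exact rank_sub_smul_vecMulVec_add_one A _ _ (hω_dot ▸ hne)
end

section
/- Let A ∈ ℂ^{m×n}, X ∈ ℂ^{n×k}, Y ∈ ℂ^{m×k}, and suppose M = Y* A X is invertible (as a k×k matrix). Then rank(A − A X M⁻¹ Y* A) = rank(A) − k. -/
/-!
The bordered matrix `G = [[Y*AX, Y*A], [AX, A]] = [Y*; 1] · A · [X, 1]` has the same rank as `A`: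
it factors through `A` and contains `A` as a block. Since its top-left block `M = Y*AX` is
invertible, block elimination `G = L · diag(M, S) · U` with unitriangular `L`, `U` and Schur
complement `S = A - AX M⁻¹ Y*A` gives `rank G = k + rank S`.
-/

open Matrix

namespace Submodule

variable {R M N : Type*} [DivisionRing R] [AddCommGroup M] [AddCommGroup N] [Module R M]
  [Module R N]

theorem finrank_prod (p : Submodule R M) (q : Submodule R N) [FiniteDimensional R p]
    [FiniteDimensional R q] :
    Module.finrank R (p.prod q) = Module.finrank R p + Module.finrank R q := by
  have hinj : Function.Injective (p.subtype.prodMap q.subtype) :=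
    Prod.map_injective.2 ⟨p.injective_subtype, q.injective_subtype⟩
  rw [← Module.finrank_prod, ← LinearMap.finrank_range_of_inj hinj, LinearMap.range_prodMap,
    range_subtype, range_subtype]

end Submodule

namespace Matrix

variable {K : Type*} [Field K] {l m n o : Type*} [Fintype n] [Fintype o]

theorem rank_fromBlocks_zero_zero (A : Matrix m n K) (D : Matrix l o K) :
    (fromBlocks A 0 0 D).rank = A.rank + D.rank := by
  let eₙ := LinearEquiv.sumArrowLequivProdArrow n o K K
  let eₘ := LinearEquiv.sumArrowLequivProdArrow m l K K
  have h : (fromBlocks A 0 0 D).mulVecLin =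
      eₘ.symm.toLinearMap ∘ₗ A.mulVecLin.prodMap D.mulVecLin ∘ₗ eₙ.toLinearMap := by
    ext v i
    cases i <;> simp [eₘ, eₙ, fromBlocks_mulVec, LinearEquiv.sumArrowLequivProdArrow,
      Equiv.sumArrowEquivProdArrow]
  rw [rank, h, LinearMap.range_comp, LinearMap.range_comp_of_range_eq_top _ eₙ.range,
    LinearMap.range_prodMap, LinearEquiv.finrank_map_eq, Submodule.finrank_prod]
  rfl

theorem rank_fromBlocks_of_invertible₁₁ [Fintype l] [Fintype m] [DecidableEq m]
    (A : Matrix m m K) (B : Matrix m o K) (C : Matrix l m K) (D : Matrix l o K) [Invertible A] :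
    (fromBlocks A B C D).rank = Fintype.card m + (D - C * ⅟A * B).rank := by
  classical
  have hL : IsUnit (fromBlocks 1 0 (C * ⅟A) 1 : Matrix (m ⊕ l) (m ⊕ l) K).det := by simp
  have hR : IsUnit (fromBlocks 1 (⅟A * B) 0 1 : Matrix (m ⊕ o) (m ⊕ o) K).det := by simp
  rw [fromBlocks_eq_of_invertible₁₁, Matrix.mul_assoc, rank_mul_eq_right_of_isUnit_det _ _ hL,
    rank_mul_eq_left_of_isUnit_det _ _ hR, rank_fromBlocks_zero_zero,
    rank_of_isUnit A (isUnit_of_invertible A)]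

theorem rank_fromBlocks_bordered [Fintype m] (A : Matrix m n K) (B : Matrix l m K)
    (C : Matrix n o K) : (fromBlocks (B * A * C) (B * A) (A * C) A).rank = A.rank := by
  classical
  set G := fromBlocks (B * A * C) (B * A) (A * C) A
  have hG : G = fromRows B (1 : Matrix m m K) * A * fromCols C (1 : Matrix n n K) := by
    rw [fromRows_mul, fromRows_mul_fromCols]
    simp only [G, Matrix.one_mul, Matrix.mul_one]
  have hA : G.submatrix Sum.inr Sum.inr = A := rfl
  refine le_antisymm ?_ (hA ▸ rank_submatrix_le G Sum.inr Sum.inr)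
  rw [hG]
  exact (rank_mul_le_left _ _).trans (rank_mul_le_right _ _)

end Matrix

/-- Classical block Wedderburn rank reduction: if M = Y* A X is invertible then
    rank(A − A X M⁻¹ Y* A) = rank A − k. -/
theorem wedderburn_block_rank_reduction (m n k : ℕ)
    (A : Matrix (Fin m) (Fin n) ℂ)
    (X : Matrix (Fin n) (Fin k) ℂ) (Y : Matrix (Fin m) (Fin k) ℂ)
    (M : Matrix (Fin k) (Fin k) ℂ) (hM : M = Yᴴ * A * X) (hinv : IsUnit M) :
    (A - A * X * M⁻¹ * (Yᴴ * A)).rank + k = A.rank := by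
  subst hM
  have := hinv.invertible
  have hG := rank_fromBlocks_of_invertible₁₁ (Yᴴ * A * X) (Yᴴ * A) (A * X) A
  rw [rank_fromBlocks_bordered, invOf_eq_nonsing_inv, Fintype.card_fin] at hG
  omega
end

section
/- Let A ∈ ℂ^{m×p} and B ∈ ℂ^{m×q} satisfy range(A) ⊕ null(B*) = ℂᵐ (direct sum). Then P = A (B*A)⁺ B* is the (oblique) projection onto range(A) along null(B*); in particular P² = P, range(P) = range(A), and null(P) = null(B*). -/
/-!
Since `range A ⊓ null B* = ⊥`, the matrix `B*` is injective on `range A`, so the first Penrose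
identity `B*A (B*A)⁺ B*A = B*A` cancels to `A (B*A)⁺ B*A = A`, i.e. `P A = A`. Hence `P` is
idempotent with `range P = range A`. Its kernel contains `null B*` and, being a complement of
`range P = range A`, is disjoint from `range A`; by the modular law a complement of `range A`
that contains another complement equals it.
-/

open Matrix

/-- `Mp` satisfies the four Penrose conditions for `M`. -/
def IsMoorePenrose {a b : ℕ} (M : Matrix (Fin a) (Fin b) ℂ)
    (Mp : Matrix (Fin b) (Fin a) ℂ) : Prop :=
  M * Mp * M = M ∧ Mp * M * Mp = Mp ∧ (M * Mp)ᴴ = M * Mp ∧ (Mp * M)ᴴ = Mp * M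

theorem IsCompl.eq_of_le_of_disjoint {α : Type*} [Lattice α] [BoundedOrder α]
    [IsModularLattice α] {a b c : α} (h : IsCompl a b) (hbc : b ≤ c) (hac : Disjoint a c) :
    b = c :=
  calc b = b ⊔ a ⊓ c := by rw [hac.eq_bot, sup_bot_eq]
    _ = (b ⊔ a) ⊓ c := (sup_inf_assoc_of_le a hbc).symm
    _ = c := by rw [h.symm.sup_eq_top, top_inf_eq]

namespace Matrix

variable {R : Type*} [CommRing R] {l m n o : Type*} [Fintype m] [Fintype n] [Fintype o]

open LinearMap in
theorem mul_left_cancel_of_disjoint_range_ker {A : Matrix m n R} {C : Matrix l m R}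
    (h : Disjoint (range A.mulVecLin) (ker C.mulVecLin)) {X Y : Matrix n o R}
    (hXY : C * (A * X) = C * (A * Y)) : A * X = A * Y := by
  rw [ext_iff_mulVec]
  intro v
  have hmem : A *ᵥ (X *ᵥ v - Y *ᵥ v) ∈ range A.mulVecLin ⊓ ker C.mulVecLin :=
    ⟨⟨_, rfl⟩, by simp [mulVec_sub, mulVec_mulVec, ← Matrix.mul_assoc, hXY]⟩
  rw [h.eq_bot, Submodule.mem_bot, mulVec_sub] at hmem
  simpa [mulVec_mulVec, sub_eq_zero] using hmem

section

variable [Fintype l] {A : Matrix m n R} {G : Matrix n l R} {C : Matrix l m R}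

theorem mul_mul_mul_eq_self_of_disjoint_range_ker [DecidableEq n]
    (h : Disjoint (LinearMap.range A.mulVecLin) (LinearMap.ker C.mulVecLin))
    (hG : C * A * G * (C * A) = C * A) : A * G * C * A = A := by
  simpa only [Matrix.mul_assoc, Matrix.mul_one] using
    mul_left_cancel_of_disjoint_range_ker h (X := G * (C * A)) (Y := 1)
      (by simpa only [Matrix.mul_assoc, Matrix.mul_one] using hG)

theorem isIdempotentElem_mul_mul (hA : A * G * C * A = A) : IsIdempotentElem (A * G * C) := by
  simp only [IsIdempotentElem, ← Matrix.mul_assoc, hA]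

theorem range_mulVecLin_mul_mul (hA : A * G * C * A = A) :
    LinearMap.range (A * G * C).mulVecLin = LinearMap.range A.mulVecLin := by
  apply le_antisymm
  · rw [Matrix.mul_assoc, mulVecLin_mul]
    exact LinearMap.range_comp_le_range _ _
  · conv_lhs => rw [← hA, mulVecLin_mul]
    exact LinearMap.range_comp_le_range _ _

theorem ker_mulVecLin_mul_mul (hA : A * G * C * A = A)
    (hAC : IsCompl (LinearMap.range A.mulVecLin) (LinearMap.ker C.mulVecLin)) :
    LinearMap.ker (A * G * C).mulVecLin = LinearMap.ker C.mulVecLin := by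
  refine (hAC.eq_of_le_of_disjoint ?_ ?_).symm
  · rw [mulVecLin_mul]
    exact LinearMap.ker_le_ker_comp _ _
  · rw [← range_mulVecLin_mul_mul hA]
    have hP : IsIdempotentElem (A * G * C).mulVecLin := by
      rw [IsIdempotentElem, Module.End.mul_eq_comp, ← mulVecLin_mul, (isIdempotentElem_mul_mul hA).eq]
    exact (LinearMap.IsIdempotentElem.isCompl hP).disjoint

end

end Matrix

/-- Projection formula: if range A ⊕ null B* = ℂᵐ then P = A (B*A)⁺ B* is the
    projection onto range A along null B*. -/
theorem projection_formula (m p q : ℕ)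
    (A : Matrix (Fin m) (Fin p) ℂ) (B : Matrix (Fin m) (Fin q) ℂ)
    (hcompl : IsCompl (LinearMap.range A.mulVecLin) (LinearMap.ker Bᴴ.mulVecLin))
    (Mp : Matrix (Fin p) (Fin q) ℂ) (hMp : IsMoorePenrose (Bᴴ * A) Mp)
    (P : Matrix (Fin m) (Fin m) ℂ) (hP : P = A * Mp * Bᴴ) :
    P * P = P ∧
    LinearMap.range P.mulVecLin = LinearMap.range A.mulVecLin ∧
    LinearMap.ker P.mulVecLin = LinearMap.ker Bᴴ.mulVecLin := by
  have hA : A * Mp * Bᴴ * A = A :=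
    mul_mul_mul_eq_self_of_disjoint_range_ker hcompl.disjoint hMp.1
  subst hP
  exact ⟨(isIdempotentElem_mul_mul hA).eq, range_mulVecLin_mul_mul hA,
    ker_mulVecLin_mul_mul hA hcompl⟩
end

section
/- For arbitrary matrices A ∈ ℂ^{m×p} and B ∈ ℂ^{m×q}, the matrix P = A (B*A)⁺ B* satisfies P² = P, rank(P) = rank(B*A), range(P) = range(AA*B), and null(P) = null(A*BB*). -/
open Matrix

/-! With `M = Bᴴ A`, so that `Mᴴ = Aᴴ B`, the Penrose identities give `Mp = Mᴴ Mpᴴ Mp`,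
`Mp = Mp Mpᴴ Mᴴ`, `Mᴴ = Mp M Mᴴ` and `Mᴴ = Mᴴ M Mp`. Substituting them into `P = A Mp Bᴴ` shows that
`P` and `A Aᴴ B` each factor through the other on the left, and `P` and `Aᴴ B Bᴴ` on the right,
which gives the range and the kernel; `P = A Mp M Mp Bᴴ` and `M = Bᴴ P A` give the rank. -/

namespace Matrix

variable {R l m n o : Type*} [CommSemiring R] [Fintype m] [Fintype n] [Fintype o]

theorem range_mulVecLin_eq_of_eq_mul {X : Matrix l m R} {Y : Matrix l n R}
    (Z : Matrix n m R) (W : Matrix m n R) (hX : X = Y * Z) (hY : Y = X * W) :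
    LinearMap.range X.mulVecLin = LinearMap.range Y.mulVecLin := by
  apply le_antisymm
  · rw [hX, mulVecLin_mul]
    exact LinearMap.range_comp_le_range _ _
  · rw [hY, mulVecLin_mul]
    exact LinearMap.range_comp_le_range _ _

theorem ker_mulVecLin_eq_of_eq_mul [Fintype l] {X : Matrix l m R} {Y : Matrix o m R}
    (Z : Matrix l o R) (W : Matrix o l R) (hX : X = Z * Y) (hY : Y = W * X) :
    LinearMap.ker X.mulVecLin = LinearMap.ker Y.mulVecLin := by
  apply le_antisymm
  · rw [hY, mulVecLin_mul]
    exact LinearMap.ker_le_ker_comp _ _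
  · rw [hX, mulVecLin_mul]
    exact LinearMap.ker_le_ker_comp _ _

end Matrix

namespace IsMoorePenrose

variable {a b : ℕ} {M : Matrix (Fin a) (Fin b) ℂ} {Mp : Matrix (Fin b) (Fin a) ℂ}

theorem conjTranspose_mul_conjTranspose_mul (h : IsMoorePenrose M Mp) : Mᴴ * Mpᴴ * Mp = Mp := by
  rw [← conjTranspose_mul, h.2.2.2, h.2.1]

theorem mul_conjTranspose_mul_conjTranspose (h : IsMoorePenrose M Mp) :
    Mp * Mpᴴ * Mᴴ = Mp := by
  rw [Matrix.mul_assoc, ← conjTranspose_mul, h.2.2.1, ← Matrix.mul_assoc, h.2.1]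

theorem mul_mul_conjTranspose (h : IsMoorePenrose M Mp) : Mp * M * Mᴴ = Mᴴ := by
  rw [← h.2.2.2, ← conjTranspose_mul, ← Matrix.mul_assoc, h.1]

theorem conjTranspose_mul_mul (h : IsMoorePenrose M Mp) : Mᴴ * M * Mp = Mᴴ := by
  rw [Matrix.mul_assoc, ← h.2.2.1, ← conjTranspose_mul, h.1]

end IsMoorePenrose

section Projection

variable {m p q : ℕ} {A : Matrix (Fin m) (Fin p) ℂ} {B : Matrix (Fin m) (Fin q) ℂ}
  {Mp : Matrix (Fin p) (Fin q) ℂ}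

theorem isIdempotentElem_mul_pinv_mul_conjTranspose (hMp : IsMoorePenrose (Bᴴ * A) Mp) :
    IsIdempotentElem (A * Mp * Bᴴ) :=
  calc A * Mp * Bᴴ * (A * Mp * Bᴴ) = A * (Mp * (Bᴴ * A) * Mp) * Bᴴ := by
        simp only [Matrix.mul_assoc]
    _ = A * Mp * Bᴴ := by rw [hMp.2.1]

theorem rank_mul_pinv_mul_conjTranspose (hMp : IsMoorePenrose (Bᴴ * A) Mp) :
    (A * Mp * Bᴴ).rank = (Bᴴ * A).rank := by
  apply le_antisymm
  · have h : A * Mp * Bᴴ = A * Mp * ((Bᴴ * A) * (Mp * Bᴴ)) := by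
      conv_lhs => rw [← hMp.2.1]
      simp only [Matrix.mul_assoc]
    rw [h]
    exact (rank_mul_le_right _ _).trans (rank_mul_le_left _ _)
  · have h : Bᴴ * A = Bᴴ * ((A * Mp * Bᴴ) * A) := by
      conv_lhs => rw [← hMp.1]
      simp only [Matrix.mul_assoc]
    rw [h]
    exact (rank_mul_le_right _ _).trans (rank_mul_le_left _ _)

theorem range_mul_pinv_mul_conjTranspose (hMp : IsMoorePenrose (Bᴴ * A) Mp) :
    LinearMap.range (A * Mp * Bᴴ).mulVecLin = LinearMap.range (A * Aᴴ * B).mulVecLin := by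
  refine range_mulVecLin_eq_of_eq_mul (Mpᴴ * Mp * Bᴴ) (A * Aᴴ * B) ?_ ?_
  · conv_lhs => rw [← hMp.conjTranspose_mul_conjTranspose_mul]
    simp only [conjTranspose_mul, conjTranspose_conjTranspose, Matrix.mul_assoc]
  · calc A * Aᴴ * B = A * (Mp * (Bᴴ * A) * (Bᴴ * A)ᴴ) := by
          rw [hMp.mul_mul_conjTranspose, conjTranspose_mul, conjTranspose_conjTranspose,
            Matrix.mul_assoc]
      _ = A * Mp * Bᴴ * (A * Aᴴ * B) := by
          simp only [conjTranspose_mul, conjTranspose_conjTranspose, Matrix.mul_assoc]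

theorem ker_mul_pinv_mul_conjTranspose (hMp : IsMoorePenrose (Bᴴ * A) Mp) :
    LinearMap.ker (A * Mp * Bᴴ).mulVecLin = LinearMap.ker (Aᴴ * B * Bᴴ).mulVecLin := by
  refine ker_mulVecLin_eq_of_eq_mul (A * (Mp * Mpᴴ)) (Aᴴ * B * Bᴴ) ?_ ?_
  · conv_lhs => rw [← hMp.mul_conjTranspose_mul_conjTranspose]
    simp only [conjTranspose_mul, conjTranspose_conjTranspose, Matrix.mul_assoc]
  · calc Aᴴ * B * Bᴴ = (Bᴴ * A)ᴴ * (Bᴴ * A) * Mp * Bᴴ := by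
          rw [hMp.conjTranspose_mul_mul, conjTranspose_mul, conjTranspose_conjTranspose]
      _ = Aᴴ * B * Bᴴ * (A * Mp * Bᴴ) := by
          simp only [conjTranspose_mul, conjTranspose_conjTranspose, Matrix.mul_assoc]

end Projection

/-- For arbitrary A, B: P = A (B*A)⁺ B* is a projection with
    rank P = rank(B*A), range P = range(AA*B) and null P = null(A*BB*). -/
theorem projection_formula_general (m p q : ℕ)
    (A : Matrix (Fin m) (Fin p) ℂ) (B : Matrix (Fin m) (Fin q) ℂ)
    (Mp : Matrix (Fin p) (Fin q) ℂ) (hMp : IsMoorePenrose (Bᴴ * A) Mp)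
    (P : Matrix (Fin m) (Fin m) ℂ) (hP : P = A * Mp * Bᴴ) :
    P * P = P ∧ P.rank = (Bᴴ * A).rank ∧
    LinearMap.range P.mulVecLin = LinearMap.range (A * Aᴴ * B).mulVecLin ∧
    LinearMap.ker P.mulVecLin = LinearMap.ker (Aᴴ * B * Bᴴ).mulVecLin := by
  subst hP
  exact ⟨(isIdempotentElem_mul_pinv_mul_conjTranspose hMp).eq,
    rank_mul_pinv_mul_conjTranspose hMp, range_mul_pinv_mul_conjTranspose hMp,
    ker_mul_pinv_mul_conjTranspose hMp⟩
end

section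
/- If P, Q ∈ ℂ^{n×n} are orthogonal projections (P² = P = P*, Q² = Q = Q*), then (PQ)⁺ = Q (PQ)⁺ P and (PQ)⁺ is idempotent. -/
/-!
From the Penrose conditions, `R = (PQ)ᴴ Rᴴ R = Q P Rᴴ R` and `R = R Rᴴ (PQ)ᴴ = R Rᴴ Q P`, so
idempotence of `Q` and `P` gives `Q R = R = R P`. Then `Q R P = R` and `R R = R P Q R = R`.
-/

open Matrix

namespace IsMoorePenrose

variable {a b : ℕ} {M : Matrix (Fin a) (Fin b) ℂ} {Mp : Matrix (Fin b) (Fin a) ℂ}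

theorem eq_conjTranspose_mul_mul (h : IsMoorePenrose M Mp) : Mp = Mᴴ * Mpᴴ * Mp :=
  calc Mp = Mp * M * Mp := h.2.1.symm
    _ = (Mp * M)ᴴ * Mp := by rw [h.2.2.2]
    _ = Mᴴ * Mpᴴ * Mp := by rw [conjTranspose_mul]

theorem eq_mul_mul_conjTranspose (h : IsMoorePenrose M Mp) : Mp = Mp * Mpᴴ * Mᴴ :=
  calc Mp = Mp * (M * Mp) := by rw [← Matrix.mul_assoc, h.2.1]
    _ = Mp * (M * Mp)ᴴ := by rw [h.2.2.1]
    _ = Mp * Mpᴴ * Mᴴ := by rw [conjTranspose_mul, Matrix.mul_assoc]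

end IsMoorePenrose

/-- For orthogonal projections P, Q: (PQ)⁺ = Q (PQ)⁺ P and (PQ)⁺ is idempotent. -/
theorem pinv_of_product_of_orthogonal_projections (n : ℕ)
    (P Q : Matrix (Fin n) (Fin n) ℂ)
    (hP : P * P = P) (hP' : Pᴴ = P) (hQ : Q * Q = Q) (hQ' : Qᴴ = Q)
    (R : Matrix (Fin n) (Fin n) ℂ) (hR : IsMoorePenrose (P * Q) R) :
    R = Q * R * P ∧ R * R = R := by
  have hQR : Q * R = R := by
    have hR_left := hR.eq_conjTranspose_mul_mul
    rw [conjTranspose_mul, hP', hQ'] at hR_left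
    rw [hR_left]
    simp only [← mul_assoc, hQ]
  have hRP : R * P = R := by
    have hR_right := hR.eq_mul_mul_conjTranspose
    rw [conjTranspose_mul, hP', hQ'] at hR_right
    rw [hR_right]
    simp only [mul_assoc, hP]
  refine ⟨by rw [hQR, hRP], ?_⟩
  calc R * R = R * P * (Q * R) := by rw [hRP, hQR]
    _ = R * (P * Q) * R := by simp only [mul_assoc]
    _ = R := hR.2.1
end

section
/- Let V, W be subspaces of ℂᵐ with V ⊕ W = ℂᵐ. If P_{W⊥} denotes the orthogonal projection onto the orthogonal complement of W and P_V the orthogonal projection onto V, then (P_{W⊥} P_V)⁺ is the projection onto V along W. -/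
/-!
Let `E` be the projection onto `V` along `W`. For an idempotent `p`, `p a = a` iff
`range a ≤ range p`, and `a p = a` iff `ker p ≤ ker a`; as `range E = V = range P_V` and
`ker E = W = ker P_{W⊥}`, this gives `P_V E = E`, `E P_V = P_V`, `E P_{W⊥} = E` and
`P_{W⊥} E = P_{W⊥}`. Hence `(P_{W⊥} P_V) E = P_{W⊥}` and `E (P_{W⊥} P_V) = P_V` are Hermitian
idempotents, the four Penrose conditions hold for `E`, and uniqueness of the Moore–Penrose
inverse gives `(P_{W⊥} P_V)⁺ = E`.
-/

open Matrix

theorem IsMoorePenrose.unique {a b : ℕ} {M : Matrix (Fin a) (Fin b) ℂ}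
    {R E : Matrix (Fin b) (Fin a) ℂ} (hR : IsMoorePenrose M R) (hE : IsMoorePenrose M E) :
    R = E := by
  obtain ⟨hR1, hR2, hR3, hR4⟩ := hR
  obtain ⟨hE1, hE2, hE3, hE4⟩ := hE
  have hMR : M * R = M * E :=
    calc M * R = (M * E * M * R)ᴴ := by rw [hE1, hR3]
    _ = (M * R)ᴴ * (M * E)ᴴ := by rw [← conjTranspose_mul, Matrix.mul_assoc (M * E)]
    _ = M * E := by rw [hR3, hE3, ← Matrix.mul_assoc, hR1]
  have hRM : R * M = E * M :=
    calc R * M = (R * (M * E * M))ᴴ := by rw [hE1, hR4]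
    _ = (E * M)ᴴ * (R * M)ᴴ := by rw [← conjTranspose_mul, Matrix.mul_assoc, Matrix.mul_assoc]
    _ = E * M := by rw [hE4, hR4, Matrix.mul_assoc E, ← Matrix.mul_assoc M, hR1]
  calc R = R * M * R := hR2.symm
  _ = E * M * E := by rw [hRM, Matrix.mul_assoc, hMR, ← Matrix.mul_assoc]
  _ = E := hE2

namespace Matrix

variable {R : Type*} [CommRing R] {l n : Type*} [Fintype n] [DecidableEq n]

theorem isIdempotentElem_mulVecLin_iff {p : Matrix n n R} :
    IsIdempotentElem p.mulVecLin ↔ IsIdempotentElem p := by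
  rw [IsIdempotentElem, IsIdempotentElem, Module.End.mul_eq_comp, ← mulVecLin_mul,
    ← toLin'_apply', ← toLin'_apply', toLin'.injective.eq_iff]

theorem IsIdempotentElem.mul_eq_right_iff [Fintype l] [DecidableEq l] {p : Matrix n n R} (hp : IsIdempotentElem p)
    (a : Matrix n l R) :
    p * a = a ↔ LinearMap.range a.mulVecLin ≤ LinearMap.range p.mulVecLin := by
  rw [← LinearMap.IsIdempotentElem.comp_eq_right_iff (isIdempotentElem_mulVecLin_iff.2 hp),
    ← mulVecLin_mul, ← toLin'_apply', ← toLin'_apply', toLin'.injective.eq_iff]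

theorem IsIdempotentElem.mul_eq_left_iff {p : Matrix n n R} (hp : IsIdempotentElem p)
    (a : Matrix l n R) :
    a * p = a ↔ LinearMap.ker p.mulVecLin ≤ LinearMap.ker a.mulVecLin := by
  rw [← LinearMap.IsIdempotentElem.comp_eq_left_iff (isIdempotentElem_mulVecLin_iff.2 hp),
    ← mulVecLin_mul, ← toLin'_apply', ← toLin'_apply', toLin'.injective.eq_iff]

end Matrix

theorem isMoorePenrose_mul_of_mul_eq {m : ℕ} {P Q E : Matrix (Fin m) (Fin m) ℂ}
    (hQ : Q * Q = Q) (hPh : Pᴴ = P) (hQh : Qᴴ = Q)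
    (hPE : P * E = E) (hEP : E * P = P) (hEQ : E * Q = E) (hQE : Q * E = Q) :
    IsMoorePenrose (Q * P) E := by
  have hME : Q * P * E = Q := by rw [Matrix.mul_assoc, hPE, hQE]
  have hEM : E * (Q * P) = P := by rw [← Matrix.mul_assoc, hEQ, hEP]
  exact ⟨by rw [hME, ← Matrix.mul_assoc, hQ], by rw [hEM, hPE], by rw [hME, hQh],
    by rw [hEM, hPh]⟩

/-- If V ⊕ W = ℂᵐ, P_V is the orthogonal projection onto V (Hermitian idempotent
    with range V), and P_{W⊥} is the orthogonal projection onto W⊥ (the Hermitian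
    idempotent with kernel W), then (P_{W⊥} P_V)⁺ is the projection onto V along W. -/
theorem pinv_gives_oblique_projection (m : ℕ)
    (V W : Submodule ℂ (Fin m → ℂ)) (hVW : IsCompl V W)
    (PV PWperp : Matrix (Fin m) (Fin m) ℂ)
    (hPV1 : PV * PV = PV) (hPV2 : PVᴴ = PV)
    (hPV3 : LinearMap.range PV.mulVecLin = V)
    (hPW1 : PWperp * PWperp = PWperp) (hPW2 : PWperpᴴ = PWperp)
    (hPW3 : LinearMap.ker PWperp.mulVecLin = W)
    (R : Matrix (Fin m) (Fin m) ℂ) (hR : IsMoorePenrose (PWperp * PV) R) :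
    R * R = R ∧ LinearMap.range R.mulVecLin = V ∧ LinearMap.ker R.mulVecLin = W := by
  set E := LinearMap.toMatrix' (V.projection W hVW)
  have hEV : LinearMap.range E.mulVecLin = V := by
    rw [← toLin'_apply', toLin'_toMatrix', Submodule.range_projection]
  have hEW : LinearMap.ker E.mulVecLin = W := by
    rw [← toLin'_apply', toLin'_toMatrix', Submodule.ker_projection]
  have hE : IsIdempotentElem E := by
    rw [← isIdempotentElem_mulVecLin_iff, ← toLin'_apply', toLin'_toMatrix']
    exact Submodule.isIdempotentElem_projection hVW
  have hPen : IsMoorePenrose (PWperp * PV) E := isMoorePenrose_mul_of_mul_eq hPW1 hPV2 hPW2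
    ((IsIdempotentElem.mul_eq_right_iff hPV1 E).2 (by rw [hEV, hPV3]))
    ((hE.mul_eq_right_iff PV).2 (by rw [hEV, hPV3]))
    ((IsIdempotentElem.mul_eq_left_iff hPW1 E).2 (by rw [hEW, hPW3]))
    ((hE.mul_eq_left_iff PWperp).2 (by rw [hEW, hPW3]))
  obtain rfl := hR.unique hPen
  exact ⟨hE, hEV, hEW⟩
end

section
/- Let A ∈ ℂ^{m×n}, X ∈ ℂ^{n×p}, Y ∈ ℂ^{m×q}, and suppose rank(Y*AX) = k. Then rank(A − (AX)(Y*AX)⁺(Y*A)) = rank(A) − k. -/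
open Matrix

/-!
Put `G = X Mp Yᴴ`. Since `Mp (Yᴴ A X) Mp = Mp`, the matrix `A G` is idempotent, so
`A = (A - A G A) + A G A` with the column spaces of the two summands inside `range A`, one in
`ker (A G)` and the other in `range (A G)`. These are complementary, so
`rank A = rank (A - A G A) + rank (A G A)`. Finally `rank (A G A) = k`: it factors through `Mp`,
whose rank is at most that of `Yᴴ A X` because `Mp = Mp (Yᴴ A X) Mp`, while
`Yᴴ (A G A) X = (Yᴴ A X) Mp (Yᴴ A X) = Yᴴ A X`.
-/

namespace Matrix

variable {K : Type*} [Field K] {m n p q : Type*} [Fintype m] [Fintype n] [Fintype p] [Fintype q]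

theorem rank_sub_add_rank_of_isIdempotentElem_mul (A : Matrix m n K) (C : Matrix n m K)
    (hAC : IsIdempotentElem (A * C)) : (A - A * C * A).rank + (A * C * A).rank = A.rank := by
  set P := (A * C).mulVecLin
  have hP : IsIdempotentElem P := by
    rw [IsIdempotentElem, Module.End.mul_eq_comp, ← mulVecLin_mul, hAC.eq]
  have hsup : LinearMap.range (A - A * C * A).mulVecLin ⊔ LinearMap.range (A * C * A).mulVecLin
      = LinearMap.range A.mulVecLin := by
    apply le_antisymm
    · refine sup_le ?_ ?_
      · rintro _ ⟨x, rfl⟩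
        exact ⟨x - (C * A) *ᵥ x, by simp [mulVec_sub, mulVec_mulVec, Matrix.mul_assoc]⟩
      · rw [Matrix.mul_assoc, mulVecLin_mul]
        exact LinearMap.range_comp_le_range _ _
    · rintro _ ⟨x, rfl⟩
      rw [show A.mulVecLin x = (A - A * C * A).mulVecLin x + (A * C * A).mulVecLin x by simp]
      exact Submodule.add_mem_sup ⟨x, rfl⟩ ⟨x, rfl⟩
  have hdisj : Disjoint (LinearMap.range (A - A * C * A).mulVecLin)
      (LinearMap.range (A * C * A).mulVecLin) := by
    refine (LinearMap.IsIdempotentElem.isCompl hP).disjoint.symm.mono ?_ ?_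
    · refine LinearMap.range_le_ker_iff.mpr ?_
      rw [← mulVecLin_mul, Matrix.mul_sub, ← Matrix.mul_assoc,
        hAC.eq, sub_self, mulVecLin_zero]
    · rw [mulVecLin_mul]
      exact LinearMap.range_comp_le_range _ _
  rw [rank, rank, rank, ← hsup, ← Submodule.finrank_sup_add_finrank_inf_eq, hdisj.eq_bot,
    finrank_bot, add_zero]

theorem rank_le_of_mul_mul_eq_self {M : Matrix m n K} {G : Matrix n m K} (h : G * M * G = G) :
    G.rank ≤ M.rank :=
  calc G.rank = (G * M * G).rank := by rw [h]
    _ ≤ (G * M).rank := rank_mul_le_left _ _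
    _ ≤ M.rank := rank_mul_le_right _ _

variable (A : Matrix m n K) (X : Matrix n p K) (W : Matrix q m K) {G : Matrix p q K}

theorem isIdempotentElem_mul_mul_mul_of_mul_mul_eq_self (h : G * (W * A * X) * G = G) :
    IsIdempotentElem (A * (X * G * W)) := by
  rw [IsIdempotentElem,
    show A * (X * G * W) * (A * (X * G * W)) = A * X * (G * (W * A * X) * G) * W by
      simp only [Matrix.mul_assoc], h]
  simp only [Matrix.mul_assoc]

theorem rank_mul_mul_mul_eq_of_reflexive_inverse (h₁ : W * A * X * G * (W * A * X) = W * A * X)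
    (h₂ : G * (W * A * X) * G = G) : (A * X * G * (W * A)).rank = (W * A * X).rank := by
  refine le_antisymm ?_ ?_
  · calc (A * X * G * (W * A)).rank ≤ (A * X * G).rank := rank_mul_le_left _ _
      _ ≤ G.rank := rank_mul_le_right _ _
      _ ≤ (W * A * X).rank := rank_le_of_mul_mul_eq_self h₂
  · calc (W * A * X).rank = (W * (A * X * G * (W * A)) * X).rank := by
          rw [← h₁]; simp only [Matrix.mul_assoc]
      _ ≤ (W * (A * X * G * (W * A))).rank := rank_mul_le_left _ _
      _ ≤ (A * X * G * (W * A)).rank := rank_mul_le_right _ _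

end Matrix

/-- Generalized Wedderburn rank reduction: if rank(Y*AX) = k then
    rank(A − (AX)(Y*AX)⁺(Y*A)) = rank A − k. -/
theorem generalized_wedderburn_rank_reduction (m n p q k : ℕ)
    (A : Matrix (Fin m) (Fin n) ℂ)
    (X : Matrix (Fin n) (Fin p) ℂ) (Y : Matrix (Fin m) (Fin q) ℂ)
    (Mp : Matrix (Fin p) (Fin q) ℂ) (hMp : IsMoorePenrose (Yᴴ * A * X) Mp)
    (hk : (Yᴴ * A * X).rank = k) :
    (A - (A * X) * Mp * (Yᴴ * A)).rank + k = A.rank := by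
  obtain ⟨h₁, h₂, -, -⟩ := hMp
  have hB : A * X * Mp * (Yᴴ * A) = A * (X * Mp * Yᴴ) * A := by simp only [Matrix.mul_assoc]
  rw [← hk, ← rank_mul_mul_mul_eq_of_reflexive_inverse A X Yᴴ h₁ h₂, hB]
  exact rank_sub_add_rank_of_isIdempotentElem_mul A _
    (isIdempotentElem_mul_mul_mul_of_mul_mul_eq_self A X Yᴴ h₂)
end

section
/- Let A ∈ ℂ^{m×n}, X ∈ ℂ^{n×p}, Y ∈ ℂ^{m×q}, with rank(Y*AX) = k, and set B = A − (AX)(Y*AX)⁺(Y*A). Then null(B) = null(A) ⊕ range(X (Y*AX)⁺), and in particular range(X (Y*AX)⁺) ∩ null(A) = 0. -/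
/-!
With `u = X Mp` and `z = Y*`, the Penrose condition `Mp (Y*AX) Mp = Mp` gives `u z A u = u`,
so `e = u z A` is an idempotent with range `range u`, and `B = A (1 - e)`. Every `v` splits
as `(1 - e) v + e v`; if `Bv = 0` the first summand lies in `null A`.
Conversely `e` kills `null A` and fixes `range u`, so the two meet only in `0`.
-/

open Matrix

namespace LinearMap

variable {R M N L : Type*} [CommRing R] [AddCommGroup M] [AddCommGroup N] [AddCommGroup L]
  [Module R M] [Module R N] [Module R L]
  {f : M →ₗ[R] N} {u : L →ₗ[R] M} {z : N →ₗ[R] L}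

theorem range_inf_ker_eq_bot_of_comp_eq (hu : u ∘ₗ z ∘ₗ f ∘ₗ u = u) :
    range u ⊓ ker f = ⊥ := by
  rw [eq_bot_iff]
  rintro _ ⟨⟨w, rfl⟩, hw⟩
  rw [SetLike.mem_coe, mem_ker] at hw
  rw [Submodule.mem_bot, ← hu]
  simp only [comp_apply, hw, map_zero]

theorem ker_sub_comp_eq_sup_range (hu : u ∘ₗ z ∘ₗ f ∘ₗ u = u) :
    ker (f - f ∘ₗ u ∘ₗ z ∘ₗ f) = ker f ⊔ range u := by
  have hfu : ∀ w, f (u (z (f (u w)))) = f (u w) := fun w => congrArg f (LinearMap.congr_fun hu w)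
  apply le_antisymm
  · intro v hv
    rw [mem_ker, sub_apply, sub_eq_zero] at hv
    refine Submodule.mem_sup.2 ⟨v - u (z (f v)), ?_, u (z (f v)), mem_range_self u _, by abel⟩
    simpa only [mem_ker, map_sub, sub_eq_zero, comp_apply] using hv
  · refine sup_le (fun v hv => ?_) ?_
    · rw [mem_ker] at hv ⊢
      simp only [sub_apply, comp_apply, hv, map_zero, sub_zero]
    · rintro _ ⟨w, rfl⟩
      simp only [mem_ker, sub_apply, comp_apply, hfu, sub_self]

end LinearMap

theorem generalized_wedderburn_kernel_general (m n p q : ℕ)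
    (A : Matrix (Fin m) (Fin n) ℂ)
    (X : Matrix (Fin n) (Fin p) ℂ) (Y : Matrix (Fin m) (Fin q) ℂ)
    (Mp : Matrix (Fin p) (Fin q) ℂ) (hMp : IsMoorePenrose (Yᴴ * A * X) Mp)
    (B : Matrix (Fin m) (Fin n) ℂ) (hB : B = A - (A * X) * Mp * (Yᴴ * A)) :
    LinearMap.ker B.mulVecLin =
      LinearMap.ker A.mulVecLin ⊔ LinearMap.range (X * Mp).mulVecLin ∧
    LinearMap.range (X * Mp).mulVecLin ⊓ LinearMap.ker A.mulVecLin = ⊥ := by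
  have hu : (X * Mp).mulVecLin ∘ₗ Yᴴ.mulVecLin ∘ₗ A.mulVecLin ∘ₗ (X * Mp).mulVecLin =
      (X * Mp).mulVecLin := by
    simp only [← mulVecLin_mul]
    congr 1
    calc X * Mp * (Yᴴ * (A * (X * Mp))) = X * (Mp * (Yᴴ * A * X) * Mp) := by
          simp only [Matrix.mul_assoc]
      _ = X * Mp := by rw [hMp.2.1]
  have hB' : B.mulVecLin = A.mulVecLin -
      A.mulVecLin ∘ₗ (X * Mp).mulVecLin ∘ₗ Yᴴ.mulVecLin ∘ₗ A.mulVecLin := by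
    simp only [← mulVecLin_mul]
    refine LinearMap.ext fun v => ?_
    simp only [hB, LinearMap.sub_apply, mulVecLin_apply, sub_mulVec, Matrix.mul_assoc]
  rw [hB']
  exact ⟨LinearMap.ker_sub_comp_eq_sup_range hu, LinearMap.range_inf_ker_eq_bot_of_comp_eq hu⟩

/-- With B = A − (AX)(Y*AX)⁺(Y*A): null B = null A ⊕ range(X (Y*AX)⁺),
    an internal direct sum. -/
theorem generalized_wedderburn_kernel (m n p q k : ℕ)
    (A : Matrix (Fin m) (Fin n) ℂ)
    (X : Matrix (Fin n) (Fin p) ℂ) (Y : Matrix (Fin m) (Fin q) ℂ)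
    (Mp : Matrix (Fin p) (Fin q) ℂ) (hMp : IsMoorePenrose (Yᴴ * A * X) Mp)
    (hk : (Yᴴ * A * X).rank = k)
    (B : Matrix (Fin m) (Fin n) ℂ) (hB : B = A - (A * X) * Mp * (Yᴴ * A)) :
    LinearMap.ker B.mulVecLin =
      LinearMap.ker A.mulVecLin ⊔ LinearMap.range (X * Mp).mulVecLin ∧
    LinearMap.range (X * Mp).mulVecLin ⊓ LinearMap.ker A.mulVecLin = ⊥ :=
  generalized_wedderburn_kernel_general m n p q A X Y Mp hMp B hB
end

section
/- Let A ∈ ℂ^{n×n} with A² = A, and let X ∈ ℂ^{n×p}, Y ∈ ℂ^{n×q}. Then B = A − (AX)(Y*AX)⁺(Y*A) satisfies B² = B. That is, the generalized Wedderburn reduction of a projection is a projection. -/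
open Matrix

theorem Matrix.isIdempotentElem_mul_mul_of_outer_inverse {k l n R : Type*} [Fintype k]
    [Fintype l] [Fintype n] [NonUnitalSemiring R] (P : Matrix n k R) (G : Matrix k l R)
    (Q : Matrix l n R) (hG : G * (Q * P) * G = G) : IsIdempotentElem (P * G * Q) :=
  calc P * G * Q * (P * G * Q) = P * (G * (Q * P) * G) * Q := by simp only [Matrix.mul_assoc]
    _ = P * G * Q := by rw [hG]

/-- The generalized Wedderburn reduction of an idempotent matrix is idempotent. -/
theorem reduction_of_projection_is_projection (n p q : ℕ)
    (A : Matrix (Fin n) (Fin n) ℂ) (hA : A * A = A)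
    (X : Matrix (Fin n) (Fin p) ℂ) (Y : Matrix (Fin n) (Fin q) ℂ)
    (Mp : Matrix (Fin p) (Fin q) ℂ) (hMp : IsMoorePenrose (Yᴴ * A * X) Mp)
    (B : Matrix (Fin n) (Fin n) ℂ) (hB : B = A - (A * X) * Mp * (Yᴴ * A)) :
    B * B = B := by
  obtain ⟨-, hMpM, -, -⟩ := hMp
  subst hB
  have hM : Yᴴ * A * (A * X) = Yᴴ * A * X := by
    rw [← Matrix.mul_assoc, Matrix.mul_assoc Yᴴ, hA]
  have hE : IsIdempotentElem (A * X * Mp * (Yᴴ * A)) :=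
    isIdempotentElem_mul_mul_of_outer_inverse _ _ _ (hM ▸ hMpM)
  exact hE.sub hA (by simp only [Matrix.mul_assoc, hA]) (by simp only [← Matrix.mul_assoc, hA])
end

section
/- Let B = A − (AX)(Y*AX)⁺(Y*A) be a generalized Wedderburn reduction of A ∈ ℂ^{m×n}. Then B A⁺ B = B, i.e., B is a {2}-inverse of A⁺. Moreover, A⁺ B A⁺ equals the generalized Wedderburn reduction of A⁺ by the matrices AX and A*Y, namely A⁺ − (A⁺(AX)) ((Y*A) A⁺ (AX))⁺ ((Y*A) A⁺). -/
/-
Write `E = AX`, `F = Y*A` and `M = Y*AX`. Since `A A⁺ A = A`, the middle matrix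
`F A⁺ E` of the reduction of `A⁺` is `M` itself, so by uniqueness of the
Moore–Penrose inverse both reductions use the same `M⁺`. Both claims are then
ring identities: `A A⁺ E = E`, `F A⁺ A = F`, `M⁺ M M⁺ = M⁺` and `A⁺ A A⁺ = A⁺`
collapse the expansions of `B A⁺ B` and `A⁺ B A⁺`.
-/

open Matrix

theorem IsMoorePenrose.unique_s16 {a b : ℕ} {M : Matrix (Fin a) (Fin b) ℂ}
    {P Q : Matrix (Fin b) (Fin a) ℂ}
    (hP : IsMoorePenrose M P) (hQ : IsMoorePenrose M Q) : P = Q := by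
  obtain ⟨hP₁, hP₂, hP₃, hP₄⟩ := hP
  obtain ⟨hQ₁, hQ₂, hQ₃, hQ₄⟩ := hQ
  have h_left : M * P = M * Q :=
    calc M * P = (M * Q) * (M * P) := by rw [← Matrix.mul_assoc, hQ₁]
    _ = (M * Q)ᴴ * (M * P)ᴴ := by rw [hQ₃, hP₃]
    _ = Qᴴ * (M * P * M)ᴴ := by simp only [conjTranspose_mul, Matrix.mul_assoc]
    _ = M * Q := by rw [hP₁, ← conjTranspose_mul, hQ₃]
  have h_right : P * M = Q * M :=
    calc P * M = (P * M) * (Q * M) := by rw [Matrix.mul_assoc, ← Matrix.mul_assoc M, hQ₁]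
    _ = (P * M)ᴴ * (Q * M)ᴴ := by rw [hP₄, hQ₄]
    _ = (M * P * M)ᴴ * Qᴴ := by simp only [conjTranspose_mul, Matrix.mul_assoc]
    _ = Q * M := by rw [hP₁, ← conjTranspose_mul, hQ₄]
  calc P = P * M * P := hP₂.symm
  _ = Q * M * Q := by rw [Matrix.mul_assoc, h_left, ← Matrix.mul_assoc, h_right]
  _ = Q := hQ₂

section Reduction

variable {R : Type*} [Ring R] {m n p q : Type*} [Fintype m] [Fintype n] [Fintype p]
  [Fintype q] (A : Matrix m n R) (Ap : Matrix n m R) (E : Matrix m p R) (F : Matrix q n R)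
  (G : Matrix p q R)

theorem sub_mul_mul_sub_eq_of_inner_inverse (hA : A * Ap * A = A) (hE : A * Ap * E = E)
    (hF : F * Ap * A = F) (hG : G * (F * Ap * E) * G = G) :
    (A - E * G * F) * Ap * (A - E * G * F) = A - E * G * F := by
  have h_left : A * Ap * (E * G * F) = E * G * F := by
    simp only [← Matrix.mul_assoc, hE]
  have h_right : E * G * F * Ap * A = E * G * F :=
    calc E * G * F * Ap * A = E * G * (F * Ap * A) := by simp only [Matrix.mul_assoc]
    _ = E * G * F := by rw [hF]
  have h_middle : E * G * F * Ap * (E * G * F) = E * G * F := by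
    calc E * G * F * Ap * (E * G * F) = E * (G * (F * Ap * E) * G) * F := by
          simp only [Matrix.mul_assoc]
    _ = E * G * F := by rw [hG, Matrix.mul_assoc]
  simp only [Matrix.sub_mul, Matrix.mul_sub, hA, h_left, h_right, h_middle]
  abel

theorem mul_sub_mul_eq_of_outer_inverse (hAp : Ap * A * Ap = Ap) :
    Ap * (A - E * G * F) * Ap = Ap - Ap * E * G * (F * Ap) := by
  simp only [Matrix.mul_sub, Matrix.sub_mul, hAp, Matrix.mul_assoc]

end Reduction

/-- For B = A − (AX)(Y*AX)⁺(Y*A): B A⁺ B = B, and A⁺ B A⁺ is the generalized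
    Wedderburn reduction of A⁺ by the matrices AX and A*Y, i.e.
    A⁺ B A⁺ = A⁺ − (A⁺(AX)) ((Y*A) A⁺ (AX))⁺ ((Y*A) A⁺). -/
theorem reduction_two_inverse_and_pinv_reduction (m n p q : ℕ)
    (A : Matrix (Fin m) (Fin n) ℂ)
    (X : Matrix (Fin n) (Fin p) ℂ) (Y : Matrix (Fin m) (Fin q) ℂ)
    (Ap : Matrix (Fin n) (Fin m) ℂ) (hA : IsMoorePenrose A Ap)
    (Mp : Matrix (Fin p) (Fin q) ℂ) (hMp : IsMoorePenrose (Yᴴ * A * X) Mp)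
    (Np : Matrix (Fin p) (Fin q) ℂ)
    (hNp : IsMoorePenrose ((Yᴴ * A) * Ap * (A * X)) Np)
    (B : Matrix (Fin m) (Fin n) ℂ) (hB : B = A - (A * X) * Mp * (Yᴴ * A)) :
    B * Ap * B = B ∧
    Ap * B * Ap = Ap - (Ap * (A * X)) * Np * ((Yᴴ * A) * Ap) := by
  obtain ⟨hA₁, hA₂, -, -⟩ := hA
  have h_middle : (Yᴴ * A) * Ap * (A * X) = Yᴴ * A * X :=
    calc (Yᴴ * A) * Ap * (A * X) = Yᴴ * (A * Ap * A) * X := by simp only [Matrix.mul_assoc]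
    _ = Yᴴ * A * X := by rw [hA₁]
  obtain rfl : Np = Mp := (h_middle ▸ hNp).unique_s16 hMp
  subst hB
  refine ⟨sub_mul_mul_sub_eq_of_inner_inverse _ _ _ _ _ hA₁ ?_ ?_ (h_middle ▸ hMp.2.1),
    mul_sub_mul_eq_of_outer_inverse _ _ _ _ _ hA₂⟩
  · rw [← Matrix.mul_assoc, hA₁]
  · rw [Matrix.mul_assoc Yᴴ A Ap, Matrix.mul_assoc, hA₁]
end

section
/- Let A ∈ ℂ^{n×n} be Hermitian positive semidefinite and X ∈ ℂ^{n×p}. Then A − AX (X*AX)⁺ X*A is Hermitian positive semidefinite. -/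
/-!
For a Hermitian `G` with `G (XᴴAX) G = G`, the reduction factors as
`A - AXGXᴴA = Wᴴ A W` with `W = 1 - XGXᴴA`, so it is positive semidefinite as a congruence
of `A`. The Moore–Penrose inverse of the Hermitian matrix `XᴴAX` is such a `G`: it is
Hermitian because its conjugate transpose is again a Moore–Penrose inverse of `XᴴAX`, and
these are unique.
-/

open Matrix
open scoped ComplexOrder

theorem Matrix.PosSemidef.sub_mul_mul_conjTranspose_mul_of_isHermitian
    {n p R : Type*} [Ring R] [PartialOrder R] [StarRing R] [Fintype n] [Fintype p]
    [DecidableEq n] {A : Matrix n n R} (hA : A.PosSemidef) (X : Matrix n p R)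
    {G : Matrix p p R} (hG : G.IsHermitian) (hGG : G * (Xᴴ * A * X) * G = G) :
    (A - A * X * G * (Xᴴ * A)).PosSemidef := by
  have key : A - A * X * G * (Xᴴ * A) =
      (1 - X * G * (Xᴴ * A))ᴴ * A * (1 - X * G * (Xᴴ * A)) := by
    have hGG' : A * X * (G * (Xᴴ * A * X) * G) * (Xᴴ * A) = A * X * G * (Xᴴ * A) := by
      rw [hGG]
    simp only [conjTranspose_sub, conjTranspose_one, conjTranspose_mul, conjTranspose_conjTranspose,
      hA.1.eq, hG.eq, sub_mul, mul_sub, one_mul, mul_one, Matrix.mul_assoc] at hGG' ⊢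
    rw [hGG']
    abel
  rw [key]
  exact hA.conjTranspose_mul_mul_same _

namespace IsMoorePenrose

variable {a b : ℕ} {M : Matrix (Fin a) (Fin b) ℂ} {Mp : Matrix (Fin b) (Fin a) ℂ}

theorem conjTranspose (h : IsMoorePenrose M Mp) : IsMoorePenrose Mᴴ Mpᴴ := by
  obtain ⟨h₁, h₂, h₃, h₄⟩ := h
  refine ⟨?_, ?_, ?_, ?_⟩
  · simpa only [conjTranspose_mul, Matrix.mul_assoc] using congrArg (·ᴴ) h₁
  · simpa only [conjTranspose_mul, Matrix.mul_assoc] using congrArg (·ᴴ) h₂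
  · rw [← conjTranspose_mul, h₄, h₄]
  · rw [← conjTranspose_mul, h₃, h₃]

theorem unique_s19 {P Q : Matrix (Fin b) (Fin a) ℂ} (hP : IsMoorePenrose M P)
    (hQ : IsMoorePenrose M Q) : P = Q := by
  obtain ⟨hP₁, hP₂, hP₃, hP₄⟩ := hP
  obtain ⟨hQ₁, hQ₂, hQ₃, hQ₄⟩ := hQ
  have hMP : M * P = M * Q :=
    calc M * P = (M * Q * M) * P := by rw [hQ₁]
      _ = (M * Q)ᴴ * (M * P)ᴴ := by rw [hQ₃, hP₃, Matrix.mul_assoc]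
      _ = (M * P * M * Q)ᴴ := by simp only [conjTranspose_mul, Matrix.mul_assoc]
      _ = M * Q := by rw [hP₁, hQ₃]
  have hPM : P * M = Q * M :=
    calc P * M = P * (M * Q * M) := by rw [hQ₁]
      _ = (P * M)ᴴ * (Q * M)ᴴ := by rw [hQ₄, hP₄, Matrix.mul_assoc, Matrix.mul_assoc]
      _ = (Q * (M * P * M))ᴴ := by simp only [conjTranspose_mul, Matrix.mul_assoc]
      _ = Q * M := by rw [hP₁, hQ₄]
  calc P = P * M * P := hP₂.symm
    _ = Q * (M * Q) := by rw [hPM, Matrix.mul_assoc, hMP]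
    _ = Q := by rw [← Matrix.mul_assoc, hQ₂]

end IsMoorePenrose

theorem IsMoorePenrose.isHermitian {a : ℕ} {M Mp : Matrix (Fin a) (Fin a) ℂ}
    (hM : M.IsHermitian) (h : IsMoorePenrose M Mp) : Mp.IsHermitian :=
  (hM.eq ▸ h.conjTranspose).unique_s19 h

/-- The generalized Wedderburn reduction of a Hermitian positive semidefinite
    matrix by X = Y is Hermitian positive semidefinite. -/
theorem reduction_of_posSemidef_is_posSemidef (n p : ℕ)
    (A : Matrix (Fin n) (Fin n) ℂ) (hA : A.PosSemidef)
    (X : Matrix (Fin n) (Fin p) ℂ)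
    (Mp : Matrix (Fin p) (Fin p) ℂ) (hMp : IsMoorePenrose (Xᴴ * A * X) Mp) :
    (A - A * X * Mp * (Xᴴ * A)).PosSemidef :=
  hA.sub_mul_mul_conjTranspose_mul_of_isHermitian X
    (hMp.isHermitian (isHermitian_conjTranspose_mul_mul X hA.1)) hMp.2.1
end
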